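/- arXiv:1907.01434 — 3 statements merged into one kernel-verified Lean document; each statement's English description precedes it below -/
import Mathlib

section
/- (Lemma 4.2, A₁-weight duality implies pointwise Riesz potential comparison) Let n ≥ 2 and β ∈ (0,n). Let f, g : ℝⁿ → [0,∞) be measurable and suppose there is a constant C such that ∫_{ℝⁿ} f(x) ω(x) dx ≤ C ∫_{ℝⁿ} g(x) ω(x) dx for every Muckenhoupt A₁ weight ω. Then I_β f(z) ≤ C · I_β g(z) for almost every z ∈ ℝⁿ. -/
open MeasureTheory Metric Set Filter ENNReal
open scoped RealInnerProductSpace NNReal Topology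

noncomputable section

abbrev En (n : ℕ) := EuclideanSpace ℝ (Fin n)

variable {n : ℕ}

/-- Carathéodory vector field satisfying the growth and monotonicity conditions. -/
def GoodVF (n : ℕ) (p Λ₁ Λ₂ : ℝ) (A : En n → En n → En n) : Prop :=
  (∀ ξ : En n, Measurable fun x => A x ξ) ∧
  (∀ᵐ x ∂(volume : Measure (En n)), Continuous fun ξ => A x ξ) ∧
  (∀ᵐ x ∂(volume : Measure (En n)), ∀ ξ : En n, ‖A x ξ‖ ≤ Λ₁ * ‖ξ‖ ^ (p - 1)) ∧
  (∀ᵐ x ∂(volume : Measure (En n)), ∀ ξ η : En n, (ξ, η) ≠ (0, 0) →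
    Λ₂ * (‖ξ‖ ^ 2 + ‖η‖ ^ 2) ^ ((p - 2) / 2) * ‖ξ - η‖ ^ 2 ≤ ⟪A x ξ - A x η, ξ - η⟫)

/-- Smooth test function compactly supported in `Ω`. -/
def TestFn (Ω : Set (En n)) (φ : En n → ℝ) : Prop :=
  ContDiff ℝ (⊤ : ℕ∞) φ ∧ HasCompactSupport φ ∧ tsupport φ ⊆ Ω

/-- Weak solution of `div A(x,∇u) = div f` in `Ω`. -/
def WeakSol (Ω : Set (En n)) (A : En n → En n → En n) (f : En n → En n) (u : En n → ℝ) : Prop :=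
  (∀ᵐ x ∂(volume : Measure (En n)).restrict Ω, DifferentiableAt ℝ u x) ∧
  ∀ φ : En n → ℝ, TestFn Ω φ →
    (∫ x in Ω, ⟪A x (gradient u x), gradient φ x⟫) = ∫ x in Ω, ⟪f x, gradient φ x⟫

/-- `v` lies in the `W^{1,p}`-closure of smooth compactly supported functions on `Ω`. -/
def W1pZero (Ω : Set (En n)) (p : ℝ) (v : En n → ℝ) : Prop :=
  ∃ φ : ℕ → En n → ℝ, (∀ k, TestFn Ω (φ k)) ∧
    Tendsto (fun k => ∫ x in Ω, |v x - φ k x| ^ p) atTop (𝓝 0) ∧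
    Tendsto (fun k => ∫ x in Ω, ‖gradient v x - gradient (φ k) x‖ ^ p) atTop (𝓝 0)

/-- Fractional maximal function `M_α`. -/
def frMax (α : ℝ) (h : En n → ℝ≥0∞) (x : En n) : ℝ≥0∞ :=
  ⨆ (ρ : ℝ) (_ : 0 < ρ), ENNReal.ofReal (ρ ^ α) * ((∫⁻ y in ball x ρ, h y) / volume (ball x ρ))

/-- Cut-off fractional maximal function `M^r_α`. -/
def frMaxLt (α r : ℝ) (h : En n → ℝ≥0∞) (x : En n) : ℝ≥0∞ :=
  ⨆ (ρ : ℝ) (_ : 0 < ρ) (_ : ρ < r),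
    ENNReal.ofReal (ρ ^ α) * ((∫⁻ y in ball x ρ, h y) / volume (ball x ρ))

/-- Riesz potential of a nonnegative function. -/
def riesz (n : ℕ) (β : ℝ) (h : En n → ℝ≥0∞) (x : En n) : ℝ≥0∞ :=
  ∫⁻ y, h y * ENNReal.ofReal (‖x - y‖ ^ (β - (n : ℝ)))

/-- Riesz potential of a measure. -/
def rieszM (n : ℕ) (β : ℝ) (ν : Measure (En n)) (x : En n) : ℝ≥0∞ :=
  ∫⁻ r in Ioi (0 : ℝ), ν (ball x r) * ENNReal.ofReal (r ^ (β - (n : ℝ) - 1))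

/-- Wolff potential of a measure. -/
def wolff (n : ℕ) (α β : ℝ) (ν : Measure (En n)) (x : En n) : ℝ≥0∞ :=
  ∫⁻ r in Ioi (0 : ℝ),
    (ν (ball x r) / ENNReal.ofReal (r ^ ((n : ℝ) - α * β))) ^ (1 / (β - 1)) *
      ENNReal.ofReal (1 / r)

/-- Riesz capacity of a compact set. -/
def rieszCap (n : ℕ) (α p : ℝ) (K : Set (En n)) : ℝ≥0∞ :=
  ⨅ (φ : En n → ℝ≥0∞) (_ : Measurable φ) (_ : ∀ x ∈ K, 1 ≤ riesz n α φ x), ∫⁻ x, φ x ^ p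

/-- The `ω`-measure of a set. -/
def wSet (ω : En n → ℝ≥0∞) (S : Set (En n)) : ℝ≥0∞ := ∫⁻ x in S, ω x

/-- `ω` is an `A_∞` weight with constants `(C₀, ν₀)`. -/
def IsAInfty (ω : En n → ℝ≥0∞) (C₀ ν₀ : ℝ) : Prop :=
  ∀ (x : En n) (r : ℝ), 0 < r → ∀ S ⊆ ball x r, MeasurableSet S →
    wSet ω S ≤ ENNReal.ofReal C₀ * (volume S / volume (ball x r)) ^ ν₀ * wSet ω (ball x r)

/-- `ω` is an `A₁` weight. -/
def IsA1 (ω : En n → ℝ≥0∞) : Prop :=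
  Measurable ω ∧ (∀ (x : En n) (r : ℝ), 0 < r → ∫⁻ y in ball x r, ω y < ∞) ∧
  ∃ C : ℝ≥0∞, C < ∞ ∧ ∀ (x : En n) (r : ℝ), 0 < r →
    ((∫⁻ y in ball x r, ω y) / volume (ball x r)) *
      essSup (fun y => (ω y)⁻¹) ((volume : Measure (En n)).restrict (ball x r)) ≤ C

/-- `(δ, R₀)`-Reifenberg flatness. -/
def ReifFlat (δ R₀ : ℝ) (Ω : Set (En n)) : Prop :=
  ∀ x ∈ frontier Ω, ∀ r : ℝ, 0 < r → r ≤ R₀ →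
    ∃ e : En n, ‖e‖ = 1 ∧
      (ball x r ∩ {y | δ * r < ⟪y - x, e⟫} ⊆ Ω) ∧
      (ball x r ∩ Ω ⊆ {y | -(δ * r) < ⟪y - x, e⟫})

/-- The BMO seminorm `[A]_s^r`. -/
def ABmo (n : ℕ) (p : ℝ) (A : En n → En n → En n) (s r : ℝ) : ℝ≥0∞ :=
  ⨆ (y : En n) (ρ : ℝ) (_ : 0 < ρ) (_ : ρ ≤ r),
    ((∫⁻ x in ball y ρ, (⨆ (ξ : En n) (_ : ξ ≠ 0),
        ENNReal.ofReal (‖A x ξ - ⨍ z in ball y ρ, A z ξ‖ / ‖ξ‖ ^ (p - 1))) ^ s) /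
      volume (ball y ρ)) ^ (1 / s)

/-- The weighted Lorentz quasinorm `‖h‖_{L^{q,s}_ω(Ω)}` (`s = ∞` allowed). -/
def wLorentz (ω : En n → ℝ≥0∞) (Ω : Set (En n)) (q : ℝ) (s : ℝ≥0∞) (h : En n → ℝ≥0∞) :
    ℝ≥0∞ :=
  if s = ∞ then ⨆ (l : ℝ) (_ : 0 < l),
      ENNReal.ofReal l * (wSet ω {x ∈ Ω | ENNReal.ofReal l < h x}) ^ (1 / q)
  else (ENNReal.ofReal q * ∫⁻ l in Ioi (0 : ℝ),
      ENNReal.ofReal (l ^ (s.toReal - 1)) *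
        (wSet ω {x ∈ Ω | ENNReal.ofReal l < h x}) ^ (s.toReal / q)) ^ (1 / s.toReal)


/-- `u` is a weak solution of `div A(x,∇u) = div f` in `Ω` with `u = g` on `∂Ω`,
with the natural integrability assumptions on the data. -/
def DirichletSol (Ω : Set (En n)) (p : ℝ) (A : En n → En n → En n) (f : En n → En n)
    (g u : En n → ℝ) : Prop :=
  WeakSol Ω A f u ∧
  MemLp (fun x => gradient u x) (ENNReal.ofReal p) (volume.restrict Ω) ∧
  (∀ᵐ x ∂(volume : Measure (En n)).restrict Ω, DifferentiableAt ℝ g x) ∧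
  MemLp (fun x => gradient g x) (ENNReal.ofReal p) (volume.restrict Ω) ∧
  MemLp f (ENNReal.ofReal (p / (p - 1))) (volume.restrict Ω) ∧
  W1pZero Ω p (fun x => u x - g x)

/-! Testing the hypothesis with the weight `ω = |z - ·|^(β - n)` gives the inequality at every `z`,
so it suffices that `|z - ·|^α` is an `A₁` weight for `-n < α < 0`. On a ball `B(x, r)` put
`ρ = |z - x| + r`; the weight is at least `ρ^α` on `B`, so it is enough to bound `∫_B` by a multiple
of `|B| ρ^α`. If the pole is near (`|z - x| < 2r`), homogeneity gives
`∫_B ≤ ∫_{B(z, ρ)} = ρ^(n + α) ∫_{B(0, 1)} ≲ r^n ρ^α`; if it is far, the weight is at most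
`3^(-α) ρ^α` on all of `B`. -/

open Module

theorem setLAverage_mul_essSup_inv_le {X : Type*} [MeasurableSpace X] {μ : Measure X}
    {s : Set X} {w : X → ℝ≥0∞} {a C : ℝ≥0∞} (ha₀ : a ≠ 0) (ha : a ≠ ∞) (hs₀ : μ s ≠ 0)
    (hs : μ s ≠ ∞) (hlow : ∀ᵐ y ∂μ.restrict s, a ≤ w y)
    (hint : ∫⁻ y in s, w y ∂μ ≤ C * μ s * a) :
    (∫⁻ y in s, w y ∂μ) / μ s * essSup (fun y => (w y)⁻¹) (μ.restrict s) ≤ C :=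
  calc (∫⁻ y in s, w y ∂μ) / μ s * essSup (fun y => (w y)⁻¹) (μ.restrict s)
      ≤ C * μ s * a / μ s * a⁻¹ :=
        mul_le_mul' (ENNReal.div_le_div_right hint _)
          (essSup_le_of_ae_le _ (hlow.mono fun _ hy => ENNReal.inv_le_inv.2 hy))
    _ = C := by
        rw [mul_right_comm C, ENNReal.mul_div_cancel_right hs₀ hs, mul_assoc,
          ENNReal.mul_inv_cancel ha₀ ha, mul_one]

section RieszKernelBounds

variable {E : Type*} [NormedAddCommGroup E] [MeasurableSpace E] (μ : Measure E)

theorem ae_restrict_ball_rpow_le_rpow_norm_sub [OpensMeasurableSpace E] [NullSingletonClass μ]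
    {α : ℝ} (hα : α ≤ 0) (z x : E) (r : ℝ) :
    ∀ᵐ y ∂μ.restrict (ball x r),
      ENNReal.ofReal ((dist z x + r) ^ α) ≤ ENNReal.ofReal (‖z - y‖ ^ α) := by
  filter_upwards [ae_restrict_of_ae (μ.ae_ne z), ae_restrict_mem measurableSet_ball]
    with y hyz hy
  have hpos : 0 < ‖z - y‖ := norm_pos_iff.2 (sub_ne_zero.2 (Ne.symm hyz))
  have hle : ‖z - y‖ ≤ dist z x + r := by
    rw [← dist_eq_norm]
    linarith [dist_triangle z x y, mem_ball'.1 hy]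
  exact ENNReal.ofReal_le_ofReal (Real.rpow_le_rpow_of_nonpos hpos hle hα)

theorem setLIntegral_ball_rpow_norm_sub_le_of_le_dist {α : ℝ} (hα : α ≤ 0) {z x : E} {r : ℝ}
    (hr : 0 < r) (hfar : 2 * r ≤ dist z x) :
    ∫⁻ y in ball x r, ENNReal.ofReal (‖z - y‖ ^ α) ∂μ ≤
      ENNReal.ofReal (3 ^ (-α)) * μ (ball x r) * ENNReal.ofReal ((dist z x + r) ^ α) := by
  set ρ := dist z x + r
  have hρ : 0 < ρ := by positivity
  have hbound : ∀ y ∈ ball x r,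
      ENNReal.ofReal (‖z - y‖ ^ α) ≤ ENNReal.ofReal (3 ^ (-α) * ρ ^ α) := by
    intro y hy
    have hle : ρ / 3 ≤ ‖z - y‖ := by
      rw [← dist_eq_norm]
      linarith [dist_triangle z y x, mem_ball.1 hy]
    refine ENNReal.ofReal_le_ofReal
      ((Real.rpow_le_rpow_of_nonpos (by positivity) hle hα).trans_eq ?_)
    rw [Real.div_rpow hρ.le (by norm_num), Real.rpow_neg (by norm_num), div_eq_inv_mul]
  calc ∫⁻ y in ball x r, ENNReal.ofReal (‖z - y‖ ^ α) ∂μ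
      ≤ ∫⁻ _ in ball x r, ENNReal.ofReal (3 ^ (-α) * ρ ^ α) ∂μ :=
        setLIntegral_mono measurable_const hbound
    _ = _ := by
        rw [setLIntegral_const, ENNReal.ofReal_mul (by positivity)]
        ring

end RieszKernelBounds

section HaarRieszKernel

variable {E : Type*} [NormedAddCommGroup E] [NormedSpace ℝ E] [FiniteDimensional ℝ E]
  [MeasurableSpace E] [BorelSpace E] (μ : Measure E) [μ.IsAddHaarMeasure]

theorem setLIntegral_ball_zero_eq_comp_smul {f : E → ℝ≥0∞} (hf : Measurable f) {R : ℝ}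
    (hR : 0 < R) :
    ∫⁻ y in ball 0 R, f y ∂μ =
      ENNReal.ofReal (R ^ finrank ℝ E) * ∫⁻ x in ball 0 1, f (R • x) ∂μ := by
  have hμ : μ = ENNReal.ofReal (R ^ finrank ℝ E) • μ.map (R • ·) := by
    rw [Measure.map_addHaar_smul μ hR.ne', smul_smul, ← ENNReal.ofReal_mul (by positivity),
      abs_of_pos (by positivity), mul_inv_cancel₀ (by positivity), ENNReal.ofReal_one, one_smul]
  have hball : (fun x : E => (ball 0 R).indicator f (R • x)) =
      (ball 0 1).indicator (fun x => f (R • x)) := by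
    ext x
    simp only [indicator, mem_ball_zero_iff, norm_smul, Real.norm_of_nonneg hR.le]
    congr 1
    exact propext ⟨fun h => by nlinarith, fun h => by nlinarith⟩
  rw [← lintegral_indicator measurableSet_ball, ← lintegral_indicator measurableSet_ball, ← hball]
  conv_lhs => rw [hμ]
  rw [lintegral_smul_measure, lintegral_map (hf.indicator measurableSet_ball)
    (measurable_const_smul R), smul_eq_mul]

theorem setLIntegral_ball_rpow_norm_sub (α : ℝ) (z : E) {R : ℝ} (hR : 0 < R) :
    ∫⁻ y in ball z R, ENNReal.ofReal (‖z - y‖ ^ α) ∂μ =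
      ENNReal.ofReal (R ^ ((finrank ℝ E : ℝ) + α)) *
        ∫⁻ x in ball 0 1, ENNReal.ofReal (‖x‖ ^ α) ∂μ := by
  have hmeas : Measurable fun y : E => ENNReal.ofReal (‖y‖ ^ α) := by fun_prop
  have htranslate : ∫⁻ y in ball z R, ENNReal.ofReal (‖z - y‖ ^ α) ∂μ =
      ∫⁻ y in ball 0 R, ENNReal.ofReal (‖y‖ ^ α) ∂μ := by
    rw [← lintegral_indicator measurableSet_ball, ← lintegral_indicator measurableSet_ball,
      ← lintegral_sub_left_eq_self _ z]
    congr 1 with y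
    simp only [indicator, mem_ball, dist_eq_norm, sub_sub_cancel_left, norm_neg, sub_sub_self,
      sub_zero]
  have hscale (x : E) : ENNReal.ofReal (‖R • x‖ ^ α) =
      ENNReal.ofReal (R ^ α) * ENNReal.ofReal (‖x‖ ^ α) := by
    rw [norm_smul, Real.norm_of_nonneg hR.le, Real.mul_rpow hR.le (norm_nonneg x),
      ENNReal.ofReal_mul (by positivity)]
  rw [htranslate, setLIntegral_ball_zero_eq_comp_smul μ hmeas hR]
  simp_rw [hscale]
  rw [lintegral_const_mul _ hmeas, ← mul_assoc, ← ENNReal.ofReal_mul (by positivity),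
    Real.rpow_add hR, Real.rpow_natCast]

theorem setLIntegral_unitBall_rpow_norm_lt_top (hd : 1 ≤ finrank ℝ E) {α : ℝ}
    (hα : -(finrank ℝ E : ℝ) < α) :
    ∫⁻ x in ball 0 1, ENNReal.ofReal (‖x‖ ^ α) ∂μ < ∞ := by
  refine Integrable.lintegral_lt_top (integrableOn_ball_of_norm_le_rpow hd (C := 1) (α := -α)
    (by linarith) (ae_of_all _ fun x => ?_)
    (by fun_prop : Measurable fun x : E => ‖x‖ ^ α).aestronglyMeasurable)
  rw [neg_neg, one_mul, Real.norm_of_nonneg (by positivity)]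

theorem setLIntegral_ball_rpow_norm_sub_le_of_dist_lt (α : ℝ) {z x : E} {r : ℝ} (hr : 0 < r)
    (hnear : dist z x < 2 * r) :
    ∫⁻ y in ball x r, ENNReal.ofReal (‖z - y‖ ^ α) ∂μ ≤
      ENNReal.ofReal (3 ^ finrank ℝ E) * (∫⁻ x in ball 0 1, ENNReal.ofReal (‖x‖ ^ α) ∂μ) /
        μ (ball 0 1) * μ (ball x r) * ENNReal.ofReal ((dist z x + r) ^ α) := by
  set K := ∫⁻ x in ball (0 : E) 1, ENNReal.ofReal (‖x‖ ^ α) ∂μ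
  set V := μ (ball (0 : E) 1)
  set ρ := dist z x + r
  have hρ : 0 < ρ := by positivity
  have hρ3 : ρ ^ finrank ℝ E ≤ 3 ^ finrank ℝ E * r ^ finrank ℝ E := by
    rw [← mul_pow]; exact pow_le_pow_left₀ hρ.le (by linarith) _
  have hcancel : ∀ a b c : ℝ≥0∞, a * K / V * (b * V) * c = a * b * c * K := fun a b c => by
    rw [div_eq_mul_inv, show a * K * V⁻¹ * (b * V) * c = a * b * c * K * (V⁻¹ * V) by ring,
      ENNReal.inv_mul_cancel (measure_ball_pos μ 0 one_pos).ne' measure_ball_lt_top.ne, mul_one]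
  calc ∫⁻ y in ball x r, ENNReal.ofReal (‖z - y‖ ^ α) ∂μ
      ≤ ∫⁻ y in ball z ρ, ENNReal.ofReal (‖z - y‖ ^ α) ∂μ :=
        lintegral_mono_set (ball_subset_ball' (by rw [dist_comm, add_comm]))
    _ = ENNReal.ofReal (ρ ^ finrank ℝ E * ρ ^ α) * K := by
        rw [setLIntegral_ball_rpow_norm_sub μ α z hρ, Real.rpow_add hρ, Real.rpow_natCast]
    _ ≤ ENNReal.ofReal (3 ^ finrank ℝ E * r ^ finrank ℝ E * ρ ^ α) * K := by gcongr
    _ = _ := by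
        rw [Measure.addHaar_ball_of_pos μ x hr, hcancel, ENNReal.ofReal_mul (by positivity),
          ENNReal.ofReal_mul (by positivity)]

theorem exists_setLIntegral_ball_rpow_norm_sub_le {α : ℝ} (hα₀ : α < 0)
    (hαd : -(finrank ℝ E : ℝ) < α) :
    ∃ C < ∞, ∀ (z x : E) (r : ℝ), 0 < r →
      ∫⁻ y in ball x r, ENNReal.ofReal (‖z - y‖ ^ α) ∂μ ≤
        C * μ (ball x r) * ENNReal.ofReal ((dist z x + r) ^ α) := by
  have hd : 1 ≤ finrank ℝ E := by
    have : (0 : ℝ) < finrank ℝ E := by linarith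
    exact_mod_cast this
  have hK := setLIntegral_unitBall_rpow_norm_lt_top μ hd hαd
  refine ⟨max (ENNReal.ofReal (3 ^ finrank ℝ E) *
      (∫⁻ x in ball 0 1, ENNReal.ofReal (‖x‖ ^ α) ∂μ) / μ (ball 0 1)) (ENNReal.ofReal (3 ^ (-α))),
    max_lt (ENNReal.div_lt_top (ENNReal.mul_ne_top ENNReal.ofReal_ne_top hK.ne)
      (measure_ball_pos μ 0 one_pos).ne') ENNReal.ofReal_lt_top, fun z x r hr => ?_⟩
  rcases lt_or_ge (dist z x) (2 * r) with hnear | hfar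
  · refine (setLIntegral_ball_rpow_norm_sub_le_of_dist_lt μ α hr hnear).trans ?_
    gcongr
    exact le_max_left _ _
  · refine (setLIntegral_ball_rpow_norm_sub_le_of_le_dist μ hα₀.le hr hfar).trans ?_
    gcongr
    exact le_max_right _ _

end HaarRieszKernel

theorem isA1_rpow_norm_sub {α : ℝ} (hα₀ : α < 0) (hαn : -(n : ℝ) < α) (z : En n) :
    IsA1 (fun y : En n => ENNReal.ofReal (‖z - y‖ ^ α)) := by
  have hαd : -(finrank ℝ (En n) : ℝ) < α := by rwa [finrank_euclideanSpace_fin]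
  have : Nonempty (Fin n) := ⟨⟨0, by exact_mod_cast (by linarith : (0 : ℝ) < n)⟩⟩
  obtain ⟨C, hC, hball⟩ := exists_setLIntegral_ball_rpow_norm_sub_le volume hα₀ hαd
  refine ⟨by fun_prop, fun x r hr => ?_, C, hC, fun x r hr => ?_⟩
  · exact (hball z x r hr).trans_lt
      (ENNReal.mul_lt_top (ENNReal.mul_lt_top hC measure_ball_lt_top) ENNReal.ofReal_lt_top)
  · have hρ : 0 < dist z x + r := by positivity
    exact setLAverage_mul_essSup_inv_le (ENNReal.ofReal_pos.2 (Real.rpow_pos_of_pos hρ α)).ne'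
      ENNReal.ofReal_ne_top (measure_ball_pos _ _ hr).ne' measure_ball_lt_top.ne
      (ae_restrict_ball_rpow_le_rpow_norm_sub volume hα₀.le z x r) (hball z x r hr)

theorem stmt11_general (n : ℕ) (β : ℝ) (hβ0 : 0 < β) (hβn : β < n)
    (f g : En n → ℝ≥0∞) (C : ℝ)
    (h : ∀ ω : En n → ℝ≥0∞, IsA1 ω →
      (∫⁻ x, f x * ω x) ≤ ENNReal.ofReal C * ∫⁻ x, g x * ω x) :
    ∀ᵐ z ∂(volume : Measure (En n)),
      riesz n β f z ≤ ENNReal.ofReal C * riesz n β g z :=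
  ae_of_all _ fun z => h _ (isA1_rpow_norm_sub (by linarith) (by linarith) z)

/-- Lemma 4.2: `A₁`-weight duality implies pointwise Riesz potential comparison. -/
theorem stmt11 (n : ℕ) (hn : 2 ≤ n) (β : ℝ) (hβ0 : 0 < β) (hβn : β < n)
    (f g : En n → ℝ≥0∞) (hf : Measurable f) (hg : Measurable g) (C : ℝ)
    (h : ∀ ω : En n → ℝ≥0∞, IsA1 ω →
      (∫⁻ x, f x * ω x) ≤ ENNReal.ofReal C * ∫⁻ x, g x * ω x) :
    ∀ᵐ z ∂(volume : Measure (En n)),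
      riesz n β f z ≤ ENNReal.ofReal C * riesz n β g z :=
  stmt11_general n β hβ0 hβn f g C h
end
end

section
/- (Lemma 5.2, Hardy-type inequality for nondecreasing functions) Let k > 0, m > 0 and s ∈ ℝ. There exists a constant C = C(k,m,s) > 0 such that for every nondecreasing function H : (0,∞) → [0,∞), the inequality ∫₀^∞ ϱ^k ( ∫_ϱ^∞ H(r) r^{−s} dr/r )^m dϱ/ϱ ≤ C ∫₀^∞ ϱ^k ( H(ϱ)/ϱ^s )^m dϱ/ϱ holds (both sides possibly infinite). -/
/-!
Split `(ϱ, ∞)` into the dyadic intervals `[2ʲϱ, 2ʲ⁺¹ϱ)`. Since `H` is nondecreasing, the `j`-th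
piece of the inner integral is at most a constant times `H(2ʲ⁺¹ϱ) (2ʲ⁺¹ϱ)^(-s)`. Raising the sum
to the power `m` costs only a geometric weight `2^(jk/2)` on the `j`-th term (subadditivity of
`t ↦ t^m` for `m ≤ 1`, Hölder for `m > 1`), and the substitution `t = 2ʲ⁺¹ϱ` turns the integral of
the `j`-th term into `2^(-(j+1)k)` times the right-hand side. The resulting weights
`2^(jk/2) 2^(-(j+1)k)` have a finite sum.
-/

open MeasureTheory Metric Set Filter ENNReal
open scoped RealInnerProductSpace NNReal Topology

noncomputable section

variable {n : ℕ}

theorem MonotoneOn.monotone_indicator_Ioi {α : Type*} [LinearOrder α] {a : α} {g : α → ℝ≥0∞}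
    (hg : MonotoneOn g (Ioi a)) : Monotone ((Ioi a).indicator g) := by
  intro x y hxy
  by_cases hx : x ∈ Ioi a
  · have hy : y ∈ Ioi a := lt_of_lt_of_le hx hxy
    rw [indicator_of_mem hx, indicator_of_mem hy]
    exact hg hx hy hxy
  · rw [indicator_of_notMem hx]
    exact zero_le

theorem ENNReal.ofReal_div_rpow (x : ℝ) {r : ℝ} (hr : 0 < r) (e : ℝ) :
    ENNReal.ofReal (x / r ^ e) = ENNReal.ofReal x * ENNReal.ofReal (r ^ (-e)) := by
  rw [← ENNReal.ofReal_mul' (by positivity), Real.rpow_neg hr.le, div_eq_mul_inv]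

theorem setLIntegral_Ioi_ofReal_rpow_mul_mul_one_div (k : ℝ) (F : ℝ → ℝ≥0∞) :
    ∫⁻ ϱ in Ioi 0, ENNReal.ofReal (ϱ ^ k) * F ϱ * ENNReal.ofReal (1 / ϱ) =
      ∫⁻ ϱ in Ioi 0, ENNReal.ofReal (ϱ ^ (k - 1)) * F ϱ :=
  setLIntegral_congr_fun measurableSet_Ioi fun ϱ (hϱ : 0 < ϱ) => by
    rw [mul_right_comm, ← ENNReal.ofReal_mul (by positivity), Real.rpow_sub_one hϱ.ne',
      mul_one_div]

theorem lintegral_Ioi_comp_const_mul (f : ℝ → ℝ≥0∞) {c : ℝ} (hc : 0 < c) :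
    ∫⁻ x in Ioi 0, f (c * x) = ENNReal.ofReal c⁻¹ * ∫⁻ x in Ioi 0, f x := by
  have hmap : MeasurePreserving (c * ·) volume (ENNReal.ofReal |c⁻¹| • volume) :=
    ⟨measurable_const_mul c, Real.map_volume_mul_left hc.ne'⟩
  have := hmap.setLIntegral_comp_preimage_emb
    (Homeomorph.mulLeft₀ c hc.ne').isClosedEmbedding.measurableEmbedding f (Ioi 0)
  rw [preimage_const_mul_Ioi₀ _ hc, zero_div] at this
  rw [this, Measure.restrict_smul, lintegral_smul_measure, smul_eq_mul, abs_of_pos (inv_pos.2 hc)]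

theorem lintegral_Ioi_rpow_mul_comp_const_mul (f : ℝ → ℝ≥0∞) (a : ℝ) {c : ℝ} (hc : 0 < c) :
    ∫⁻ x in Ioi 0, ENNReal.ofReal (x ^ a) * f (c * x) =
      ENNReal.ofReal (c ^ (-(a + 1))) * ∫⁻ x in Ioi 0, ENNReal.ofReal (x ^ a) * f x := by
  have hscale : ∀ x ∈ Ioi (0 : ℝ), ENNReal.ofReal (x ^ a) * f (c * x) =
      ENNReal.ofReal (c ^ (-a)) * (ENNReal.ofReal ((c * x) ^ a) * f (c * x)) := by
    intro x hx
    rw [← mul_assoc, ← ENNReal.ofReal_mul (by positivity), Real.mul_rpow hc.le (le_of_lt hx),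
      ← mul_assoc, ← Real.rpow_add hc, neg_add_cancel, Real.rpow_zero, one_mul]
  rw [setLIntegral_congr_fun measurableSet_Ioi hscale,
    lintegral_const_mul' _ _ ENNReal.ofReal_ne_top,
    lintegral_Ioi_comp_const_mul (fun x => ENNReal.ofReal (x ^ a) * f x) hc, ← mul_assoc,
    ← ENNReal.ofReal_mul (by positivity), ← Real.rpow_neg_one, ← Real.rpow_add hc, neg_add]

theorem ENNReal.rpow_tsum_le_tsum_rpow {ι : Type*} (a : ι → ℝ≥0∞) {p : ℝ} (hp : 0 < p)
    (hp1 : p ≤ 1) : (∑' i, a i) ^ p ≤ ∑' i, a i ^ p := by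
  classical
  have hfin : ∀ s : Finset ι, (∑ i ∈ s, a i) ^ p ≤ ∑ i ∈ s, a i ^ p := by
    intro s
    induction s using Finset.induction_on with
    | empty => simp [ENNReal.zero_rpow_of_pos hp]
    | insert i s hi ih =>
      rw [Finset.sum_insert hi, Finset.sum_insert hi]
      exact (ENNReal.rpow_add_le_add_rpow _ _ hp.le hp1).trans (by gcongr)
  rw [ENNReal.tsum_eq_iSup_sum, (ENNReal.monotone_rpow_of_nonneg hp.le).map_iSup_of_continuousAt
    (ENNReal.continuous_rpow_const.continuousAt) (ENNReal.zero_rpow_of_pos hp)]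
  exact iSup_le fun s => (hfin s).trans (ENNReal.sum_le_tsum s)

theorem ENNReal.exists_rpow_tsum_le_mul_tsum_pow_mul_rpow_of_one_lt {b : ℝ≥0∞} (hb : 1 < b)
    (hb' : b ≠ ∞) {p : ℝ} (hp : 1 < p) :
    ∃ C : ℝ≥0∞, C ≠ ∞ ∧ ∀ a : ℕ → ℝ≥0∞, (∑' j, a j) ^ p ≤ C * ∑' j, b ^ j * a j ^ p := by
  set q := p.conjExponent
  have hpq : p.HolderConjugate q := .conjExponent hp
  set β := b ^ (1 / p)
  have hβ0 : β ≠ 0 := (ENNReal.rpow_pos (zero_lt_one.trans hb) hb').ne'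
  have hβ : β ≠ ∞ := ENNReal.rpow_ne_top_of_nonneg (by positivity) hb'
  have hβp : β ^ p = b := by
    rw [← ENNReal.rpow_mul, one_div_mul_cancel hpq.pos.ne', ENNReal.rpow_one]
  set r := β⁻¹ ^ q
  have hr : r < 1 :=
    ENNReal.rpow_lt_one (ENNReal.inv_lt_one.2 (ENNReal.one_lt_rpow hb (by simpa using hpq.pos)))
      hpq.symm.pos
  refine ⟨(∑' j : ℕ, r ^ j) ^ (p / q), ?_, fun a => ?_⟩
  · rw [ENNReal.tsum_geometric]
    exact ENNReal.rpow_ne_top_of_nonneg (div_pos hpq.pos hpq.symm.pos).le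
      (ENNReal.inv_ne_top.2 (tsub_pos_of_lt hr).ne')
  have hsplit : ∀ j, a j = (fun j : ℕ => β⁻¹ ^ j) j * (fun j : ℕ => β ^ j * a j) j := by
    intro j
    rw [← mul_assoc, ← mul_pow, ENNReal.inv_mul_cancel hβ0 hβ, one_pow, one_mul]
  have hHolder := ENNReal.lintegral_mul_le_Lp_mul_Lq (Measure.count : Measure ℕ) hpq.symm
    (measurable_of_countable (fun j : ℕ => β⁻¹ ^ j)).aemeasurable
    (measurable_of_countable (fun j : ℕ => β ^ j * a j)).aemeasurable
  simp only [lintegral_count, Pi.mul_apply, ← hsplit] at hHolder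
  calc (∑' j, a j) ^ p
      ≤ ((∑' j : ℕ, (β⁻¹ ^ j) ^ q) ^ (1 / q) * (∑' j, (β ^ j * a j) ^ p) ^ (1 / p)) ^ p :=
        ENNReal.rpow_le_rpow hHolder (zero_le_one.trans hp.le)
    _ = (∑' j : ℕ, r ^ j) ^ (p / q) * ∑' j, b ^ j * a j ^ p := by
        rw [ENNReal.mul_rpow_of_nonneg _ _ (zero_le_one.trans hp.le), ← ENNReal.rpow_mul,
          ← ENNReal.rpow_mul, one_div_mul_cancel hpq.pos.ne', ENNReal.rpow_one, one_div_mul_eq_div]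
        have hcomm : ∀ (x : ℝ≥0∞) (j : ℕ) (y : ℝ), (x ^ j) ^ y = (x ^ y) ^ j := fun x j y => by
          rw [← ENNReal.rpow_natCast_mul, mul_comm, ENNReal.rpow_mul_natCast]
        simp only [hcomm, ENNReal.mul_rpow_of_nonneg _ _ (zero_le_one.trans hp.le), hβp, r]

theorem ENNReal.exists_rpow_tsum_le_mul_tsum_pow_mul_rpow {b : ℝ≥0∞} (hb : 1 < b) (hb' : b ≠ ∞)
    {p : ℝ} (hp : 0 < p) :
    ∃ C : ℝ≥0∞, C ≠ ∞ ∧ ∀ a : ℕ → ℝ≥0∞, (∑' j, a j) ^ p ≤ C * ∑' j, b ^ j * a j ^ p := by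
  rcases le_or_gt p 1 with hp1 | hp1
  · refine ⟨1, one_ne_top, fun a => ?_⟩
    rw [one_mul]
    exact (ENNReal.rpow_tsum_le_tsum_rpow a hp hp1).trans
      (ENNReal.tsum_le_tsum fun j => le_mul_of_one_le_left zero_le (one_le_pow₀ hb.le))
  · exact ENNReal.exists_rpow_tsum_le_mul_tsum_pow_mul_rpow_of_one_lt hb hb' hp1

theorem Ioi_subset_iUnion_Ico_two_pow_mul {ϱ : ℝ} (hϱ : 0 < ϱ) :
    Ioi ϱ ⊆ ⋃ j : ℕ, Ico (2 ^ j * ϱ) (2 * (2 ^ j * ϱ)) := by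
  intro x hx
  obtain ⟨j, hj, hj'⟩ := exists_nat_pow_near ((one_le_div hϱ).2 (le_of_lt hx)) one_lt_two
  rw [le_div_iff₀ hϱ] at hj
  rw [div_lt_iff₀ hϱ, pow_succ] at hj'
  exact mem_iUnion.2 ⟨j, hj, by linarith⟩

theorem Real.rpow_le_max_rpow_of_mem_Icc {a b x : ℝ} (ha : 0 < a) (hx : x ∈ Icc a b) (e : ℝ) :
    x ^ e ≤ max (a ^ e) (b ^ e) := by
  rcases le_total 0 e with he | he
  · exact (Real.rpow_le_rpow (ha.le.trans hx.1) hx.2 he).trans (le_max_right _ _)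
  · exact (Real.rpow_le_rpow_of_nonpos ha hx.1 he).trans (le_max_left _ _)

theorem setLIntegral_Ico_mul_rpow_le {f : ℝ → ℝ≥0∞} (hf : Monotone f) (s : ℝ) {A : ℝ}
    (hA : 0 < A) :
    ∫⁻ r in Ico A (2 * A), f r * ENNReal.ofReal (r ^ (-s - 1)) ≤
      ENNReal.ofReal (max (2 ^ s) (1 / 2)) * (f (2 * A) * ENNReal.ofReal ((2 * A) ^ (-s))) := by
  have hbound : ∀ r ∈ Ico A (2 * A), f r * ENNReal.ofReal (r ^ (-s - 1)) ≤
      f (2 * A) * ENNReal.ofReal (max (A ^ (-s - 1)) ((2 * A) ^ (-s - 1))) := fun r hr =>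
    mul_le_mul' (hf hr.2.le)
      (ENNReal.ofReal_le_ofReal (Real.rpow_le_max_rpow_of_mem_Icc hA (Ico_subset_Icc_self hr) _))
  have hA2 : (2 * A) ^ (-s) = 2 ^ (-s) * A ^ (-s) := Real.mul_rpow zero_le_two hA.le
  have hlength : max (A ^ (-s - 1)) ((2 * A) ^ (-s - 1)) * (2 * A - A) =
      max (2 ^ s) (1 / 2) * (2 * A) ^ (-s) := by
    rw [max_mul_of_nonneg _ _ (by linarith), max_mul_of_nonneg _ _ (by positivity),
      Real.rpow_sub_one hA.ne', Real.rpow_sub_one (by positivity), hA2, ← mul_assoc,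
      ← Real.rpow_add two_pos, add_neg_cancel, Real.rpow_zero]
    congr 1 <;> field_simp <;> ring
  calc ∫⁻ r in Ico A (2 * A), f r * ENNReal.ofReal (r ^ (-s - 1))
      ≤ ∫⁻ _ in Ico A (2 * A),
          f (2 * A) * ENNReal.ofReal (max (A ^ (-s - 1)) ((2 * A) ^ (-s - 1))) :=
        setLIntegral_mono measurable_const hbound
    _ = ENNReal.ofReal (max (2 ^ s) (1 / 2)) * (f (2 * A) * ENNReal.ofReal ((2 * A) ^ (-s))) := by
        rw [setLIntegral_const, Real.volume_Ico, mul_assoc, ← ENNReal.ofReal_mul (by positivity),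
          hlength, ENNReal.ofReal_mul (by positivity)]
        ring

theorem two_rpow_half_pow_mul_ofReal_two_pow_succ_rpow (k : ℝ) (j : ℕ) :
    ((2 : ℝ≥0∞) ^ (k / 2)) ^ j * ENNReal.ofReal (((2 : ℝ) ^ (j + 1)) ^ (-k)) =
      2 ^ (-k) * ((2 : ℝ≥0∞) ^ (-(k / 2))) ^ j := by
  rw [← ENNReal.ofReal_rpow_of_pos (by positivity), ENNReal.ofReal_pow zero_le_two,
    ENNReal.ofReal_ofNat, ← ENNReal.rpow_natCast_mul, ← ENNReal.rpow_mul_natCast,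
    ← ENNReal.rpow_mul_natCast, ← ENNReal.rpow_add _ _ two_ne_zero ofNat_ne_top,
    ← ENNReal.rpow_add _ _ two_ne_zero ofNat_ne_top]
  push_cast
  ring_nf

theorem exists_lintegral_rpow_le_of_le_tsum_dyadic {k m : ℝ} (hk : 0 < k) (hm : 0 < m) :
    ∃ C : ℝ≥0∞, C ≠ ∞ ∧ ∀ J ψ : ℝ → ℝ≥0∞, Measurable ψ →
      (∀ ϱ > 0, J ϱ ≤ ∑' j : ℕ, ψ (2 ^ (j + 1) * ϱ)) →
      ∫⁻ ϱ in Ioi 0, ENNReal.ofReal (ϱ ^ (k - 1)) * J ϱ ^ m ≤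
        C * ∫⁻ t in Ioi 0, ENNReal.ofReal (t ^ (k - 1)) * ψ t ^ m := by
  set b : ℝ≥0∞ := 2 ^ (k / 2)
  have hb : b ≠ ∞ := ENNReal.rpow_ne_top_of_nonneg (half_pos hk).le ofNat_ne_top
  obtain ⟨C₁, hC₁, hsum⟩ := ENNReal.exists_rpow_tsum_le_mul_tsum_pow_mul_rpow
    (ENNReal.one_lt_rpow one_lt_two (half_pos hk)) hb hm
  have hθ : (2 : ℝ≥0∞) ^ (-(k / 2)) < 1 :=
    ENNReal.rpow_lt_one_of_one_lt_of_neg one_lt_two (by linarith)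
  refine ⟨C₁ * 2 ^ (-k) * (1 - 2 ^ (-(k / 2)))⁻¹, ?_, fun J ψ hψ hJ => ?_⟩
  · exact ENNReal.mul_ne_top
      (ENNReal.mul_ne_top hC₁ (ENNReal.rpow_ne_top_of_nonneg' two_pos ofNat_ne_top))
      (ENNReal.inv_ne_top.2 (tsub_pos_of_lt hθ).ne')
  set I := ∫⁻ t in Ioi 0, ENNReal.ofReal (t ^ (k - 1)) * ψ t ^ m
  have hpointwise : ∀ ϱ ∈ Ioi (0 : ℝ), ENNReal.ofReal (ϱ ^ (k - 1)) * J ϱ ^ m ≤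
      ∑' j : ℕ, C₁ * b ^ j * (ENNReal.ofReal (ϱ ^ (k - 1)) * ψ (2 ^ (j + 1) * ϱ) ^ m) := by
    intro ϱ hϱ
    calc ENNReal.ofReal (ϱ ^ (k - 1)) * J ϱ ^ m
        ≤ ENNReal.ofReal (ϱ ^ (k - 1)) * (C₁ * ∑' j : ℕ, b ^ j * ψ (2 ^ (j + 1) * ϱ) ^ m) := by
          gcongr
          exact (ENNReal.rpow_le_rpow (hJ ϱ hϱ) hm.le).trans (hsum _)
      _ = _ := by
          rw [← ENNReal.tsum_mul_left, ← ENNReal.tsum_mul_left]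
          exact tsum_congr fun j => by ring
  have hterm : ∀ j : ℕ, ∫⁻ ϱ in Ioi 0,
      C₁ * b ^ j * (ENNReal.ofReal (ϱ ^ (k - 1)) * ψ (2 ^ (j + 1) * ϱ) ^ m) =
      C₁ * 2 ^ (-k) * ((2 : ℝ≥0∞) ^ (-(k / 2))) ^ j * I := by
    intro j
    rw [lintegral_const_mul' _ _ (ENNReal.mul_ne_top hC₁ (ENNReal.pow_ne_top hb)),
      lintegral_Ioi_rpow_mul_comp_const_mul (fun t => ψ t ^ m) _ (by positivity), sub_add_cancel,
      ← mul_assoc, mul_assoc C₁, two_rpow_half_pow_mul_ofReal_two_pow_succ_rpow]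
    ring
  have hmeas : ∀ j : ℕ, AEMeasurable (fun ϱ : ℝ =>
      C₁ * b ^ j * (ENNReal.ofReal (ϱ ^ (k - 1)) * ψ (2 ^ (j + 1) * ϱ) ^ m))
      (volume.restrict (Ioi 0)) := fun j => by fun_prop
  calc ∫⁻ ϱ in Ioi 0, ENNReal.ofReal (ϱ ^ (k - 1)) * J ϱ ^ m
      ≤ ∫⁻ ϱ in Ioi 0, ∑' j : ℕ,
          C₁ * b ^ j * (ENNReal.ofReal (ϱ ^ (k - 1)) * ψ (2 ^ (j + 1) * ϱ) ^ m) :=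
        setLIntegral_mono' measurableSet_Ioi hpointwise
    _ = ∑' j : ℕ, C₁ * 2 ^ (-k) * ((2 : ℝ≥0∞) ^ (-(k / 2))) ^ j * I := by
        rw [lintegral_tsum hmeas]
        exact tsum_congr hterm
    _ = C₁ * 2 ^ (-k) * (1 - 2 ^ (-(k / 2)))⁻¹ * I := by
        rw [ENNReal.tsum_mul_right, ENNReal.tsum_mul_left, ENNReal.tsum_geometric]

theorem exists_lintegral_rpow_lintegral_Ioi_le_of_monotone {k m : ℝ} (hk : 0 < k) (hm : 0 < m)
    (s : ℝ) :
    ∃ C : ℝ≥0∞, C ≠ ∞ ∧ ∀ f : ℝ → ℝ≥0∞, Monotone f →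
      ∫⁻ ϱ in Ioi 0, ENNReal.ofReal (ϱ ^ (k - 1)) *
          (∫⁻ r in Ioi ϱ, f r * ENNReal.ofReal (r ^ (-s - 1))) ^ m ≤
        C * ∫⁻ ϱ in Ioi 0,
          ENNReal.ofReal (ϱ ^ (k - 1)) * (f ϱ * ENNReal.ofReal (ϱ ^ (-s))) ^ m := by
  obtain ⟨C₀, hC₀, hdyadic⟩ := exists_lintegral_rpow_le_of_le_tsum_dyadic hk hm
  set c := ENNReal.ofReal (max (2 ^ s) (1 / 2))
  have hcm : c ^ m ≠ ∞ := ENNReal.rpow_ne_top_of_nonneg hm.le ofReal_ne_top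
  refine ⟨C₀ * c ^ m, ENNReal.mul_ne_top hC₀ hcm, fun f hf => ?_⟩
  have hinner : ∀ ϱ > 0, ∫⁻ r in Ioi ϱ, f r * ENNReal.ofReal (r ^ (-s - 1)) ≤
      ∑' j : ℕ, c * (f (2 ^ (j + 1) * ϱ) * ENNReal.ofReal ((2 ^ (j + 1) * ϱ) ^ (-s))) := by
    intro ϱ hϱ
    calc ∫⁻ r in Ioi ϱ, f r * ENNReal.ofReal (r ^ (-s - 1))
        ≤ ∑' j : ℕ, ∫⁻ r in Ico (2 ^ j * ϱ) (2 * (2 ^ j * ϱ)),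
            f r * ENNReal.ofReal (r ^ (-s - 1)) :=
          (lintegral_mono_set (Ioi_subset_iUnion_Ico_two_pow_mul hϱ)).trans
            (lintegral_iUnion_le _ _)
      _ ≤ _ := ENNReal.tsum_le_tsum fun j => by
          rw [pow_succ, mul_comm _ 2, mul_assoc]
          exact setLIntegral_Ico_mul_rpow_le hf s (by positivity)
  have hψ : Measurable fun t : ℝ => c * (f t * ENNReal.ofReal (t ^ (-s))) := by
    have := hf.measurable
    fun_prop
  calc _ ≤ C₀ * ∫⁻ t in Ioi 0,
        ENNReal.ofReal (t ^ (k - 1)) * (c * (f t * ENNReal.ofReal (t ^ (-s)))) ^ m :=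
        hdyadic _ _ hψ hinner
    _ = _ := by
        simp_rw [ENNReal.mul_rpow_of_nonneg c _ hm.le, mul_left_comm _ (c ^ m)]
        rw [lintegral_const_mul' _ _ hcm, mul_assoc]

/-- Lemma 5.2: Hardy-type inequality for nondecreasing functions. -/
theorem stmt13 (k m s : ℝ) (hk : 0 < k) (hm : 0 < m) :
    ∃ C : ℝ, 0 < C ∧
      ∀ H : ℝ → ℝ, (∀ x ∈ Ioi (0 : ℝ), 0 ≤ H x) → MonotoneOn H (Ioi (0 : ℝ)) →
        (∫⁻ ϱ in Ioi (0 : ℝ), ENNReal.ofReal (ϱ ^ k) *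
            (∫⁻ r in Ioi ϱ, ENNReal.ofReal (H r / r ^ s / r)) ^ m *
            ENNReal.ofReal (1 / ϱ)) ≤
          ENNReal.ofReal C *
            ∫⁻ ϱ in Ioi (0 : ℝ), ENNReal.ofReal (ϱ ^ k) *
              (ENNReal.ofReal (H ϱ / ϱ ^ s)) ^ m * ENNReal.ofReal (1 / ϱ) := by
  obtain ⟨C, hC, hHardy⟩ := exists_lintegral_rpow_lintegral_Ioi_le_of_monotone hk hm s
  refine ⟨C.toReal + 1, by positivity, fun H _ hH => ?_⟩
  set f := (Ioi (0 : ℝ)).indicator (ENNReal.ofReal ∘ H)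
  have hf : Monotone f := (ENNReal.ofReal_mono.comp_monotoneOn hH).monotone_indicator_Ioi
  have hfH : ∀ x ∈ Ioi (0 : ℝ), ENNReal.ofReal (H x) = f x :=
    fun x hx => (indicator_of_mem hx (ENNReal.ofReal ∘ H)).symm
  have hinner : ∀ ϱ ∈ Ioi (0 : ℝ), ∫⁻ r in Ioi ϱ, ENNReal.ofReal (H r / r ^ s / r) =
      ∫⁻ r in Ioi ϱ, f r * ENNReal.ofReal (r ^ (-s - 1)) := fun ϱ hϱ =>
    setLIntegral_congr_fun measurableSet_Ioi fun r (hr : ϱ < r) => by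
      have hr0 : (0 : ℝ) < r := lt_trans hϱ hr
      rw [div_div, ← Real.rpow_add_one hr0.ne', ENNReal.ofReal_div_rpow _ hr0, neg_add',
        hfH r hr0]
  calc _ = ∫⁻ ϱ in Ioi 0, ENNReal.ofReal (ϱ ^ (k - 1)) *
          (∫⁻ r in Ioi ϱ, f r * ENNReal.ofReal (r ^ (-s - 1))) ^ m := by
        rw [setLIntegral_Ioi_ofReal_rpow_mul_mul_one_div]
        exact setLIntegral_congr_fun measurableSet_Ioi fun ϱ hϱ => by rw [hinner ϱ hϱ]
    _ ≤ C * ∫⁻ ϱ in Ioi 0,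
          ENNReal.ofReal (ϱ ^ (k - 1)) * (f ϱ * ENNReal.ofReal (ϱ ^ (-s))) ^ m :=
        hHardy f hf
    _ ≤ ENNReal.ofReal (C.toReal + 1) * ∫⁻ ϱ in Ioi 0,
          ENNReal.ofReal (ϱ ^ (k - 1)) * (f ϱ * ENNReal.ofReal (ϱ ^ (-s))) ^ m := by
        gcongr
        exact (ENNReal.le_ofReal_iff_toReal_le hC (by positivity)).2 (by linarith)
    _ = _ := by
        rw [setLIntegral_Ioi_ofReal_rpow_mul_mul_one_div]
        congr 1
        exact setLIntegral_congr_fun measurableSet_Ioi fun ϱ hϱ => by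
          rw [ENNReal.ofReal_div_rpow _ hϱ, hfH ϱ hϱ]
end
end

section
/- (Lemma 5.3, part (i): lower Wolff potential bound for iterated Riesz potentials) Let n ≥ 2, β₁, β₂ ∈ (0,n) and q > 0. There exists a constant C₁ = C₁(β₁,β₂,n,q) > 0 such that for every nonnegative Borel measure ν on ℝⁿ, the pointwise inequality I_{β₂}( (I_{β₁} ν)^q )(x) ≥ C₁ · W_{(qβ₁+β₂)/(q+1), 1/q+1}(ν)(x) holds for all x ∈ ℝⁿ (both sides valued in [0,∞]). -/
/-!
If `y ∈ B_r(x)` then `B_r(x) ⊆ B_ρ(y)` for every `ρ > 2r`, so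
`I_{β₁} ν (y) ≥ c r^{β₁-n} ν(B_r(x))` on `B_r(x)`. On the other hand, writing
`|x - y|^{β₂-n} = (n - β₂) ∫_{|x-y|}^∞ r^{β₂-n-1} dr` and exchanging the integrals gives
`I_{β₂} h (x) = (n - β₂) ∫_0^∞ r^{β₂-n-1} ∫_{B_r(x)} h dr`. Inserting the first bound into the
inner integral for `h = (I_{β₁} ν)^q` and using `|B_r| = r^n |B_1|` produces a constant multiple
of `∫_0^∞ ν(B_r(x))^q r^{(β₁-n)q+β₂} dr/r`, which is the Wolff potential.
-/

open MeasureTheory Metric Set Filter ENNReal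
open scoped RealInnerProductSpace NNReal Topology

noncomputable section

variable {n : ℕ}

lemma lintegral_Ioi_rpow_sub_one {s c : ℝ} (hs : s < 0) (hc : 0 < c) :
    ∫⁻ t in Ioi c, ENNReal.ofReal (t ^ (s - 1)) = ENNReal.ofReal (c ^ s / -s) := by
  have hs1 : s - 1 < -1 := by linarith
  rw [← ofReal_integral_eq_lintegral_ofReal (integrableOn_Ioi_rpow_of_lt hs1 hc)
      ((ae_restrict_iff' measurableSet_Ioi).2 (ae_of_all _ fun t ht =>
        Real.rpow_nonneg (hc.trans ht).le _)),
    integral_Ioi_rpow_of_lt hs1 hc, sub_add_cancel, div_neg, neg_div]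

lemma ofReal_rpow_eq_lintegral_Ioi {s d : ℝ} (hs : s < 0) (hd : 0 < d) :
    ENNReal.ofReal (d ^ s) = ∫⁻ r in Ioi d, ENNReal.ofReal (-s * r ^ (s - 1)) := by
  have hs' : 0 ≤ -s := by linarith
  simp_rw [ENNReal.ofReal_mul hs']
  rw [lintegral_const_mul _ (by fun_prop), lintegral_Ioi_rpow_sub_one hs hd,
    ← ENNReal.ofReal_mul hs', mul_div_cancel₀ _ (by linarith : -s ≠ 0)]

lemma ofReal_mul_measure_ball_le_rieszM {β r : ℝ} (hβ : β < n) (hr : 0 < r)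
    (ν : Measure (En n)) {x y : En n} (hy : y ∈ ball x r) :
    ENNReal.ofReal ((2 * r) ^ (β - n) / (n - β)) * ν (ball x r) ≤ rieszM n β ν y := by
  have h2r : 0 < 2 * r := by linarith
  calc ENNReal.ofReal ((2 * r) ^ (β - n) / (n - β)) * ν (ball x r)
      = ∫⁻ ρ in Ioi (2 * r), ν (ball x r) * ENNReal.ofReal (ρ ^ (β - n - 1)) := by
        rw [lintegral_const_mul _ (by fun_prop),
          lintegral_Ioi_rpow_sub_one (by linarith) h2r, neg_sub, mul_comm]
    _ ≤ ∫⁻ ρ in Ioi (2 * r), ν (ball y ρ) * ENNReal.ofReal (ρ ^ (β - n - 1)) := by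
        refine setLIntegral_mono' measurableSet_Ioi fun ρ hρ =>
          mul_le_mul_left (measure_mono (ball_subset_ball' ?_)) _
        rw [mem_ball] at hy
        rw [mem_Ioi] at hρ
        linarith [dist_comm x y]
    _ ≤ rieszM n β ν y := lintegral_mono_set (Ioi_subset_Ioi h2r.le)

lemma setLIntegral_Ioi_mul_indicator_ball (f : ℝ → ℝ≥0∞) {x y : En n} {c : ℝ}
    (hc : c ≤ dist y x) :
    ∫⁻ r in Ioi c, f r * (ball x r).indicator 1 y = ∫⁻ r in Ioi (dist y x), f r := by
  have hind : ∀ r, f r * (ball x r).indicator 1 y = (Ioi (dist y x)).indicator f r := fun r => by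
    by_cases hr : dist y x < r <;> simp [indicator, mem_ball, hr]
  rw [lintegral_congr hind, lintegral_indicator measurableSet_Ioi,
    Measure.restrict_restrict measurableSet_Ioi, Ioi_inter_Ioi, max_eq_left hc]

lemma lintegral_mul_volume_ball_le_riesz (hn : 0 < n) {β : ℝ} (hβ : β < n)
    (h : En n → ℝ≥0∞) (x : En n) {g : ℝ → ℝ≥0∞} (hg : Measurable g)
    (hgh : ∀ r, 0 < r → ∀ y ∈ ball x r, g r ≤ h y) :
    ∫⁻ r in Ioi 0, ENNReal.ofReal ((n - β) * r ^ (β - n - 1)) * g r * volume (ball x r) ≤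
      riesz n β h x := by
  have : Nontrivial (En n) := Module.nontrivial_of_finrank_pos (R := ℝ)
    (by rwa [finrank_euclideanSpace_fin])
  set k : ℝ → ℝ≥0∞ := fun r => ENNReal.ofReal ((n - β) * r ^ (β - n - 1))
  have hk : Measurable k := by fun_prop
  have hmeas : Measurable
      (Function.uncurry fun r y => k r * g r * (ball x r).indicator (1 : En n → ℝ≥0∞) y) :=
    ((hk.comp measurable_fst).mul (hg.comp measurable_fst)).mul
      (measurable_const.indicator (measurableSet_lt
        (continuous_snd.dist continuous_const).measurable measurable_fst))
  calc ∫⁻ r in Ioi 0, k r * g r * volume (ball x r)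
      = ∫⁻ r in Ioi 0, ∫⁻ y, k r * g r * (ball x r).indicator 1 y := by
        simp_rw [lintegral_const_mul _ (measurable_one.indicator measurableSet_ball),
          lintegral_indicator_one measurableSet_ball]
    _ = ∫⁻ y, ∫⁻ r in Ioi 0, k r * g r * (ball x r).indicator 1 y :=
        lintegral_lintegral_swap hmeas.aemeasurable
    _ ≤ ∫⁻ y, h y * ENNReal.ofReal (‖x - y‖ ^ (β - n)) := lintegral_mono_ae ?_
  -- at `y = x` the kernel takes the junk value `0 ^ (β - n) = 0`, hence only a.e.
  filter_upwards [compl_mem_ae_iff.2 (measure_singleton x)] with y hy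
  have hd : 0 < dist y x := dist_pos.2 hy
  calc ∫⁻ r in Ioi 0, k r * g r * (ball x r).indicator 1 y
      = ∫⁻ r in Ioi (dist y x), k r * g r := setLIntegral_Ioi_mul_indicator_ball _ hd.le
    _ ≤ ∫⁻ r in Ioi (dist y x), h y * k r :=
        setLIntegral_mono' measurableSet_Ioi fun r hr => by
          rw [mul_comm]
          exact mul_le_mul_left (hgh r (hd.trans hr) y (mem_ball.2 hr)) _
    _ = h y * ENNReal.ofReal (‖x - y‖ ^ (β - n)) := by
        rw [lintegral_const_mul _ hk, ← dist_eq_norm, dist_comm x y,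
          ofReal_rpow_eq_lintegral_Ioi (by linarith) hd]
        simp only [k, neg_sub]

lemma wolff_eq_lintegral {q : ℝ} (hq : 0 < q) (β₁ β₂ : ℝ) (ν : Measure (En n))
    (x : En n) :
    wolff n ((q * β₁ + β₂) / (q + 1)) (1 / q + 1) ν x =
      ∫⁻ r in Ioi 0, ν (ball x r) ^ q *
        ENNReal.ofReal (r ^ ((β₁ - n) * q + β₂ - 1)) := by
  have hexp : 1 / (1 / q + 1 - 1) = q := by field_simp; ring
  rw [wolff, hexp]
  refine setLIntegral_congr_fun measurableSet_Ioi fun r hr => ?_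
  have hr : 0 < r := hr
  have hpos : ∀ e : ℝ, 0 < r ^ e := fun e => Real.rpow_pos_of_pos hr e
  rw [ENNReal.div_rpow_of_nonneg _ _ hq.le, ENNReal.ofReal_rpow_of_pos (hpos _),
    ← Real.rpow_mul hr.le, div_eq_mul_inv, ← ENNReal.ofReal_inv_of_pos (hpos _), mul_assoc,
    ← ENNReal.ofReal_mul (by positivity), ← Real.rpow_neg hr.le, one_div r,
    ← Real.rpow_neg_one r, ← Real.rpow_add hr]
  congr 3
  field_simp
  ring

lemma const_mul_wolff_integrand_eq {β₁ β₂ q r : ℝ} (hβ₁ : β₁ < n) (hβ₂ : β₂ < n)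
    (hq : 0 < q) (hr : 0 < r) (m : ℝ≥0∞) (x : En n) :
    ENNReal.ofReal ((n - β₂) * (2 ^ (β₁ - n) / (n - β₁)) ^ q *
        (volume (ball (0 : En n) 1)).toReal) *
        (m ^ q * ENNReal.ofReal (r ^ ((β₁ - n) * q + β₂ - 1))) =
      ENNReal.ofReal ((n - β₂) * r ^ (β₂ - n - 1)) *
        (ENNReal.ofReal ((2 * r) ^ (β₁ - n) / (n - β₁)) * m) ^ q * volume (ball x r) := by
  set V := (volume (ball (0 : En n) 1)).toReal
  set a := 2 ^ (β₁ - n) / (n - β₁)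
  have hβ₁' : 0 < n - β₁ := sub_pos.2 hβ₁
  have hβ₂' : 0 < n - β₂ := sub_pos.2 hβ₂
  have hpow :
      r ^ (β₂ - n - 1) * r ^ ((β₁ - n) * q) * r ^ n = r ^ ((β₁ - n) * q + β₂ - 1) := by
    rw [← Real.rpow_natCast, ← Real.rpow_add hr, ← Real.rpow_add hr]
    ring_nf
  have hreal : (n - β₂) * a ^ q * V * r ^ ((β₁ - n) * q + β₂ - 1) =
      (n - β₂) * r ^ (β₂ - n - 1) * ((2 * r) ^ (β₁ - n) / (n - β₁)) ^ q *
        (r ^ n * V) := by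
    rw [Real.mul_rpow (by norm_num) hr.le, mul_div_right_comm,
      Real.mul_rpow (by positivity) (by positivity), ← Real.rpow_mul hr.le, ← hpow]
    ring
  rw [ENNReal.mul_rpow_of_nonneg _ _ hq.le, ENNReal.ofReal_rpow_of_nonneg (by positivity) hq.le,
    Measure.addHaar_ball_of_pos volume _ hr, finrank_euclideanSpace_fin,
    ← ENNReal.ofReal_toReal (measure_ball_lt_top (x := (0 : En n)) (r := 1)).ne]
  calc _ = m ^ q *
        ENNReal.ofReal ((n - β₂) * a ^ q * V * r ^ ((β₁ - n) * q + β₂ - 1)) := by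
        rw [ENNReal.ofReal_mul (by positivity : 0 ≤ (n - β₂) * a ^ q * V)]
        ring
    _ = _ := by
        rw [hreal, ENNReal.ofReal_mul (by positivity), ENNReal.ofReal_mul (by positivity),
          ENNReal.ofReal_mul (by positivity), ENNReal.ofReal_mul (by positivity)]
        ring

theorem stmt14_general (n : ℕ) (hn : 2 ≤ n) (β₁ β₂ q : ℝ) (hβ₁n : β₁ < n)
    (hβ₂n : β₂ < n) (hq : 0 < q) :
    ∃ C₁ : ℝ, 0 < C₁ ∧
      ∀ (ν : Measure (En n)) (x : En n),
        ENNReal.ofReal C₁ * wolff n ((q * β₁ + β₂) / (q + 1)) (1 / q + 1) ν x ≤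
          riesz n β₂ (fun y => rieszM n β₁ ν y ^ q) x := by
  have hV : 0 < (volume (ball (0 : En n) 1)).toReal :=
    ENNReal.toReal_pos (measure_ball_pos _ _ one_pos).ne' measure_ball_lt_top.ne
  have hβ₁' : 0 < n - β₁ := sub_pos.2 hβ₁n
  have hβ₂' : 0 < n - β₂ := sub_pos.2 hβ₂n
  refine ⟨(n - β₂) * (2 ^ (β₁ - n) / (n - β₁)) ^ q * (volume (ball (0 : En n) 1)).toReal,
    by positivity, fun ν x => ?_⟩
  have hν : Measurable fun r => ν (ball x r) :=
    Monotone.measurable fun _ _ h => measure_mono (ball_subset_ball h)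
  have hg : Measurable fun r : ℝ =>
      (ENNReal.ofReal ((2 * r) ^ (β₁ - n) / (n - β₁)) * ν (ball x r)) ^ q :=
    ((Measurable.ennreal_ofReal (by fun_prop)).mul hν).pow_const q
  calc _ = ∫⁻ r in Ioi 0, ENNReal.ofReal ((n - β₂) * r ^ (β₂ - n - 1)) *
        (ENNReal.ofReal ((2 * r) ^ (β₁ - n) / (n - β₁)) * ν (ball x r)) ^ q *
          volume (ball x r) := by
        rw [wolff_eq_lintegral hq, ← lintegral_const_mul' _ _ ENNReal.ofReal_ne_top]
        exact setLIntegral_congr_fun measurableSet_Ioi fun r hr =>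
          const_mul_wolff_integrand_eq hβ₁n hβ₂n hq hr _ x
    _ ≤ _ := lintegral_mul_volume_ball_le_riesz (by omega) hβ₂n _ x hg fun r hr y hy =>
        ENNReal.rpow_le_rpow (ofReal_mul_measure_ball_le_rieszM hβ₁n hr ν hy) hq.le

/-- Lemma 5.3 (i): lower Wolff potential bound for iterated Riesz potentials. -/
theorem stmt14 (n : ℕ) (hn : 2 ≤ n) (β₁ β₂ q : ℝ) (hβ₁ : 0 < β₁) (hβ₁n : β₁ < n)
    (hβ₂ : 0 < β₂) (hβ₂n : β₂ < n) (hq : 0 < q) :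
    ∃ C₁ : ℝ, 0 < C₁ ∧
      ∀ (ν : Measure (En n)) (x : En n),
        ENNReal.ofReal C₁ * wolff n ((q * β₁ + β₂) / (q + 1)) (1 / q + 1) ν x ≤
          riesz n β₂ (fun y => rieszM n β₁ ν y ^ q) x :=
  stmt14_general n hn β₁ β₂ q hβ₁n hβ₂n hq
end
end
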